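/- arXiv:2103.07310 — 4 statements merged into one kernel-verified Lean document; each statement's English description precedes it below -/
import Mathlib

section
/- Let H be a separable Hilbert space, ρ and σ nonnegative trace-class operators on H with trace one, where σ has strictly positive eigenvalues. If the relative entropy F(ρ,σ) = Tr(ρ(log ρ - log σ)) is zero, then ρ = σ. -/
open scoped InnerProductSpace

section Helpers

variable {H : Type*} [NormedAddCommGroup H] [InnerProductSpace ℂ H] [CompleteSpace H]

omit [CompleteSpace H] in
lemma my_parseval (b : HilbertBasis ℕ ℂ H) (x : H) :
    Summable (fun j => ‖⟪b j, x⟫_ℂ‖ ^ 2) ∧ (∑' j, ‖⟪b j, x⟫_ℂ‖ ^ 2) = ‖x‖ ^ 2 := by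
  have h : ∀ j, ⟪x, b j⟫_ℂ * ⟪b j, x⟫_ℂ = ((‖⟪b j, x⟫_ℂ‖ ^ 2 : ℝ) : ℂ) := by
    intro j
    rw [← inner_conj_symm x (b j), RCLike.conj_mul]
    norm_cast
  have hsum := b.summable_inner_mul_inner x x
  have htsum := b.tsum_inner_mul_inner x x
  simp only [h] at hsum htsum
  rw [inner_self_eq_norm_sq_to_K, ← Complex.ofReal_tsum] at htsum
  norm_cast at htsum
  exact ⟨Complex.summable_ofReal.mp hsum, Complex.ofReal_inj.mp htsum⟩

lemma klein_pt {r s : ℝ} (hr : 0 ≤ r) (hs : 0 < s) :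
    0 ≤ r * Real.log r - r * Real.log s - r + s ∧
    (r * Real.log r - r * Real.log s - r + s = 0 → r = s) := by
  rcases hr.eq_or_lt with h0 | h0
  · constructor
    · simp [← h0]; linarith
    · intro h; simp [← h0] at h; linarith
  · have hx : (0:ℝ) < s / r := div_pos hs h0
    have hlog : Real.log (s / r) = Real.log s - Real.log r := Real.log_div hs.ne' h0.ne'
    have hcancel : r * (s / r) = s := by field_simp
    constructor
    · have := Real.log_le_sub_one_of_pos hx
      rw [hlog] at this
      have h2 : r * (Real.log s - Real.log r) ≤ r * (s / r - 1) :=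
        mul_le_mul_of_nonneg_left this hr
      nlinarith [mul_sub r (s / r) 1, mul_sub r (Real.log s) (Real.log r)]
    · intro heq
      by_contra hne
      have hx1 : s / r ≠ 1 := by
        intro h1
        exact hne ((div_eq_one_iff_eq h0.ne').mp h1).symm
      have := Real.log_lt_sub_one_of_pos hx hx1
      rw [hlog] at this
      have h2 : r * (Real.log s - Real.log r) < r * (s / r - 1) :=
        mul_lt_mul_of_pos_left this h0
      nlinarith [mul_sub r (s / r) 1, mul_sub r (Real.log s) (Real.log r)]

lemma summable_pair_of_nonneg {f : ℕ × ℕ → ℝ} (h0 : ∀ q, 0 ≤ f q)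
    (h1 : ∀ i, Summable fun j => f (i, j))
    (h2 : Summable fun i => ∑' j, f (i, j)) : Summable f :=
  (summable_prod_of_nonneg h0).mpr ⟨h1, h2⟩

end Helpers

set_option maxHeartbeats 1000000

/-- Klein's inequality, equality case. States `ρ` and `σ` on a separable Hilbert space `H`
are described spectrally: `ρ` has eigenvalues `r i ≥ 0` with eigenbasis `c`, and `σ` has
eigenvalues `s j > 0` with eigenbasis `b`, both of unit trace.  If the relative entropy
`F(ρ,σ) = Tr(ρ log ρ) - Tr(ρ log σ) = ∑ r_i log r_i - ∑_j log(s_j) ⟨b_j, ρ b_j⟩`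
vanishes, then `ρ = σ` (equality of the associated sesquilinear forms). -/
theorem stmt5 {H : Type*} [NormedAddCommGroup H] [InnerProductSpace ℂ H]
    [CompleteSpace H]
    (c b : HilbertBasis ℕ ℂ H) (r s : ℕ → ℝ)
    (hr : ∀ i, 0 ≤ r i) (hs : ∀ j, 0 < s j)
    (hrsum : Summable r) (hrtot : ∑' i, r i = 1)
    (hssum : Summable s) (hstot : ∑' j, s j = 1)
    (hS : Summable fun i => r i * Real.log (r i))
    (hq : Summable fun j =>
      Real.log (s j) * ∑' i, r i * ‖⟪c i, b j⟫_ℂ‖ ^ 2)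
    (hF : (∑' i, r i * Real.log (r i)) -
      (∑' j, Real.log (s j) * ∑' i, r i * ‖⟪c i, b j⟫_ℂ‖ ^ 2) = 0) :
    ∀ x y : H,
      ∑' i, (r i : ℂ) * (⟪y, c i⟫_ℂ * ⟪c i, x⟫_ℂ) =
      ∑' j, (s j : ℂ) * (⟪y, b j⟫_ℂ * ⟪b j, x⟫_ℂ) := by
  -- the transition matrix
  set p : ℕ → ℕ → ℝ := fun i j => ‖⟪c i, b j⟫_ℂ‖ ^ 2 with hp_def
  have hp0 : ∀ i j, 0 ≤ p i j := fun i j => sq_nonneg _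
  have hcnorm : ∀ i, ‖c i‖ = 1 := fun i => c.orthonormal.1 i
  have hbnorm : ∀ j, ‖b j‖ = 1 := fun j => b.orthonormal.1 j
  have hP1 : ∀ i, Summable (fun j => p i j) ∧ (∑' j, p i j) = 1 := by
    intro i
    have h := my_parseval b (c i)
    have he : (fun j => p i j) = fun j => ‖⟪b j, c i⟫_ℂ‖ ^ 2 := by
      funext j; simp only [hp_def]; rw [norm_inner_symm]
    rw [he]
    exact ⟨h.1, by rw [h.2, hcnorm i, one_pow]⟩
  have hP2 : ∀ j, Summable (fun i => p i j) ∧ (∑' i, p i j) = 1 := by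
    intro j
    have h := my_parseval c (b j)
    exact ⟨h.1, by rw [hp_def]; rw [h.2, hbnorm j, one_pow]⟩
  have hp1 : ∀ i j, p i j ≤ 1 := by
    intro i j
    have := Summable.le_tsum (hP1 i).1 j (fun k _ => hp0 i k)
    rw [(hP1 i).2] at this
    exact this
  -- eigenvalue bounds
  have hr1 : ∀ i, r i ≤ 1 := by
    intro i
    have := Summable.le_tsum hrsum i (fun k _ => hr k)
    rwa [hrtot] at this
  have hs1 : ∀ j, s j < 1 := by
    intro j
    have hne : j ≠ j + 1 := by omega
    have hsum2 : s j + s (j + 1) ≤ ∑' k, s k := by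
      have := Summable.sum_le_tsum ({j, j + 1} : Finset ℕ) (fun k _ => (hs k).le) hssum
      rwa [Finset.sum_pair hne] at this
    rw [hstot] at hsum2
    have := hs (j + 1)
    linarith
  have hlogs : ∀ j, Real.log (s j) < 0 := fun j => Real.log_neg (hs j) (hs1 j)
  have hrlog : ∀ i, r i * Real.log (r i) ≤ 0 := fun i =>
    mul_nonpos_iff.mpr (Or.inl ⟨hr i, Real.log_nonpos (hr i) (hr1 i)⟩)
  -- the four pair families
  set Q : ℕ → ℝ := fun j => ∑' i, r i * p i j with hQ_def
  have hQi : ∀ j, Summable fun i => r i * p i j := by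
    intro j
    refine Summable.of_nonneg_of_le (fun i => mul_nonneg (hr i) (hp0 i j)) (fun i => ?_) hrsum
    calc r i * p i j ≤ r i * 1 := mul_le_mul_of_nonneg_left (hp1 i j) (hr i)
    _ = r i := mul_one _
  have hQ0 : ∀ j, 0 ≤ Q j := fun j => tsum_nonneg fun i => mul_nonneg (hr i) (hp0 i j)
  -- F1 : (i,j) ↦ p i j * (r i * log (r i))
  have hF1 : Summable fun q : ℕ × ℕ => p q.1 q.2 * (r q.1 * Real.log (r q.1)) := by
    have h := summable_pair_of_nonneg
      (f := fun q : ℕ × ℕ => p q.1 q.2 * (-(r q.1 * Real.log (r q.1))))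
      (fun q => mul_nonneg (hp0 q.1 q.2) (neg_nonneg.mpr (hrlog q.1)))
      (fun i => ((hP1 i).1.mul_right (-(r i * Real.log (r i)))))
      (by
        refine (summable_congr fun i => ?_).mpr hS.neg
        dsimp only
        rw [tsum_mul_right, (hP1 i).2, one_mul])
    have := h.neg
    refine (summable_congr fun q => ?_).mpr this
    ring
  have hT1 : (∑' q : ℕ × ℕ, p q.1 q.2 * (r q.1 * Real.log (r q.1)))
      = ∑' i, r i * Real.log (r i) := by
    rw [Summable.tsum_prod' hF1 fun i => ((hP1 i).1.mul_right (r i * Real.log (r i)))]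
    congr 1; funext i
    dsimp only
    rw [tsum_mul_right, (hP1 i).2, one_mul]
  -- F2 : (j,i) ↦ (r i * p i j) * log (s j)
  have hF2 : Summable fun q : ℕ × ℕ => (r q.2 * p q.2 q.1) * Real.log (s q.1) := by
    have h := summable_pair_of_nonneg
      (f := fun q : ℕ × ℕ => (r q.2 * p q.2 q.1) * (-Real.log (s q.1)))
      (fun q => mul_nonneg (mul_nonneg (hr q.2) (hp0 q.2 q.1)) (neg_nonneg.mpr (hlogs q.1).le))
      (fun j => ((hQi j).mul_right (-Real.log (s j))))
      (by
        refine (summable_congr fun j => ?_).mpr hq.neg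
        dsimp only
        rw [tsum_mul_right]
        show (∑' i, r i * p i j) * _ = _
        ring)
    have := h.neg
    refine (summable_congr fun q => ?_).mpr this
    ring
  have hT2 : (∑' q : ℕ × ℕ, (r q.2 * p q.2 q.1) * Real.log (s q.1))
      = ∑' j, Real.log (s j) * Q j := by
    rw [Summable.tsum_prod' hF2 fun j => ((hQi j).mul_right (Real.log (s j)))]
    congr 1; funext j
    dsimp only
    rw [tsum_mul_right]
    show (∑' i, r i * p i j) * _ = _
    ring
  -- F3 : (i,j) ↦ p i j * r i
  have hF3 : Summable fun q : ℕ × ℕ => p q.1 q.2 * r q.1 :=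
    summable_pair_of_nonneg
      (fun q => mul_nonneg (hp0 q.1 q.2) (hr q.1))
      (fun i => ((hP1 i).1.mul_right (r i)))
      (by
        refine (summable_congr fun i => ?_).mpr hrsum
        dsimp only
        rw [tsum_mul_right, (hP1 i).2, one_mul])
  have hT3 : (∑' q : ℕ × ℕ, p q.1 q.2 * r q.1) = 1 := by
    rw [Summable.tsum_prod' hF3 fun i => ((hP1 i).1.mul_right (r i))]
    rw [← hrtot]
    congr 1; funext i
    dsimp only
    rw [tsum_mul_right, (hP1 i).2, one_mul]
  -- F4 : (j,i) ↦ p i j * s j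
  have hF4 : Summable fun q : ℕ × ℕ => p q.2 q.1 * s q.1 :=
    summable_pair_of_nonneg
      (fun q => mul_nonneg (hp0 q.2 q.1) (hs q.1).le)
      (fun j => ((hP2 j).1.mul_right (s j)))
      (by
        refine (summable_congr fun j => ?_).mpr hssum
        dsimp only
        rw [tsum_mul_right, (hP2 j).2, one_mul])
  have hT4 : (∑' q : ℕ × ℕ, p q.2 q.1 * s q.1) = 1 := by
    rw [Summable.tsum_prod' hF4 fun j => ((hP2 j).1.mul_right (s j))]
    rw [← hstot]
    congr 1; funext j
    dsimp only
    rw [tsum_mul_right, (hP2 j).2, one_mul]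
  -- swap versions
  have hF2s : Summable fun q : ℕ × ℕ => (r q.1 * p q.1 q.2) * Real.log (s q.2) := by
    have := (Equiv.prodComm ℕ ℕ).summable_iff.mpr hF2
    refine (summable_congr fun q => ?_).mpr this
    rfl
  have hT2s : (∑' q : ℕ × ℕ, (r q.1 * p q.1 q.2) * Real.log (s q.2))
      = ∑' j, Real.log (s j) * Q j := by
    rw [← hT2, ← (Equiv.prodComm ℕ ℕ).tsum_eq
      (fun q : ℕ × ℕ => (r q.2 * p q.2 q.1) * Real.log (s q.1))]
    rfl
  have hF4s : Summable fun q : ℕ × ℕ => p q.1 q.2 * s q.2 := by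
    have := (Equiv.prodComm ℕ ℕ).summable_iff.mpr hF4
    refine (summable_congr fun q => ?_).mpr this
    rfl
  have hT4s : (∑' q : ℕ × ℕ, p q.1 q.2 * s q.2) = 1 := by
    rw [← hT4, ← (Equiv.prodComm ℕ ℕ).tsum_eq
      (fun q : ℕ × ℕ => p q.2 q.1 * s q.1)]
    rfl
  -- the combined nonnegative family
  set g : ℕ × ℕ → ℝ := fun q =>
    p q.1 q.2 * (r q.1 * Real.log (r q.1) - r q.1 * Real.log (s q.2) - r q.1 + s q.2)
    with hg_def
  have hgeq : g = fun q : ℕ × ℕ =>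
      p q.1 q.2 * (r q.1 * Real.log (r q.1)) - (r q.1 * p q.1 q.2) * Real.log (s q.2)
        - p q.1 q.2 * r q.1 + p q.1 q.2 * s q.2 := by
    funext q; simp only [hg_def]; ring
  have hg : Summable g := by
    rw [hgeq]
    exact ((hF1.sub hF2s).sub hF3).add hF4s
  have hgsum : ∑' q, g q = 0 := by
    rw [hgeq]
    rw [Summable.tsum_add ((hF1.sub hF2s).sub hF3) hF4s, Summable.tsum_sub (hF1.sub hF2s) hF3,
      Summable.tsum_sub hF1 hF2s, hT1, hT2s, hT3, hT4s]
    have : Q = fun j => ∑' i, r i * ‖⟪c i, b j⟫_ℂ‖ ^ 2 := rfl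
    rw [this]
    linarith [hF]
  have hg0 : ∀ q, 0 ≤ g q := by
    intro q
    exact mul_nonneg (hp0 q.1 q.2) (klein_pt (hr q.1) (hs q.2)).1
  have hgz : ∀ q, g q = 0 := by
    intro q
    have h1 := Summable.le_tsum hg q (fun k _ => hg0 k)
    rw [hgsum] at h1
    exact le_antisymm h1 (hg0 q)
  -- the key pointwise identity
  have hK : ∀ i j, (r i : ℂ) * ⟪c i, b j⟫_ℂ = (s j : ℂ) * ⟪c i, b j⟫_ℂ := by
    intro i j
    by_cases hz : ⟪c i, b j⟫_ℂ = 0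
    · rw [hz, mul_zero, mul_zero]
    · have hpnz : p i j ≠ 0 := pow_ne_zero 2 (norm_ne_zero_iff.mpr hz)
      have := hgz (i, j)
      simp only [hg_def] at this
      have hexpr : r i * Real.log (r i) - r i * Real.log (s j) - r i + s j = 0 := by
        rcases mul_eq_zero.mp this with h | h
        · exact absurd h hpnz
        · exact h
      have := (klein_pt (hr i) (hs j)).2 hexpr
      rw [this]
  -- now the conclusion
  intro x y
  have hbx := my_parseval b x
  -- the complex pair family
  set A : ℕ × ℕ → ℂ := fun q =>
    ((r q.1 : ℂ) * ⟪y, c q.1⟫_ℂ) * (⟪c q.1, b q.2⟫_ℂ * ⟪b q.2, x⟫_ℂ) with hA_def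
  have hAbound : ∀ q : ℕ × ℕ, ‖A q‖ ≤ r q.1 * ‖y‖ * (p q.1 q.2 + ‖⟪b q.2, x⟫_ℂ‖ ^ 2) := by
    rintro ⟨i, j⟩
    dsimp only
    have h1 : ‖A (i, j)‖ = r i * ‖⟪y, c i⟫_ℂ‖ * (‖⟪c i, b j⟫_ℂ‖ * ‖⟪b j, x⟫_ℂ‖) := by
      simp only [hA_def, norm_mul, Complex.norm_real, Real.norm_eq_abs,
        abs_of_nonneg (hr i)]
    rw [h1]
    have h2 : ‖⟪y, c i⟫_ℂ‖ ≤ ‖y‖ := by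
      have := norm_inner_le_norm (𝕜 := ℂ) y (c i)
      rwa [hcnorm i, mul_one] at this
    have h3 : ‖⟪c i, b j⟫_ℂ‖ * ‖⟪b j, x⟫_ℂ‖ ≤ p i j + ‖⟪b j, x⟫_ℂ‖ ^ 2 := by
      have := sq_nonneg (‖⟪c i, b j⟫_ℂ‖ - ‖⟪b j, x⟫_ℂ‖)
      simp only [hp_def]
      nlinarith
    exact mul_le_mul (mul_le_mul_of_nonneg_left h2 (hr i)) h3 (by positivity)
      (mul_nonneg (hr i) (norm_nonneg y))
  have hB : Summable fun q : ℕ × ℕ => r q.1 * ‖y‖ * (p q.1 q.2 + ‖⟪b q.2, x⟫_ℂ‖ ^ 2) := by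
    refine summable_pair_of_nonneg
      (fun q => mul_nonneg (mul_nonneg (hr q.1) (norm_nonneg y)) (by positivity))
      (fun i => (((hP1 i).1.add hbx.1).mul_left (r i * ‖y‖)))
      ?_
    have : (fun i => ∑' j, r i * ‖y‖ * (p i j + ‖⟪b j, x⟫_ℂ‖ ^ 2))
        = fun i => r i * (‖y‖ * (1 + ‖x‖ ^ 2)) := by
      funext i
      rw [tsum_mul_left, Summable.tsum_add (hP1 i).1 hbx.1, (hP1 i).2, hbx.2]
      ring
    rw [this]
    exact hrsum.mul_right _
  have hA : Summable A :=
    Summable.of_norm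
      (Summable.of_nonneg_of_le (fun q => norm_nonneg _) hAbound hB)
  -- per-row summability of A
  have hArow : ∀ i, Summable fun j => A (i, j) := by
    intro i
    have := (b.summable_inner_mul_inner (c i) x).mul_left ((r i : ℂ) * ⟪y, c i⟫_ℂ)
    exact this
  -- LHS = double sum
  have hLHS : (∑' i, (r i : ℂ) * (⟪y, c i⟫_ℂ * ⟪c i, x⟫_ℂ)) = ∑' q, A q := by
    rw [Summable.tsum_prod' hA hArow]
    congr 1; funext i
    rw [← b.tsum_inner_mul_inner (c i) x, ← tsum_mul_left, ← tsum_mul_left]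
    refine tsum_congr fun j => ?_
    simp only [hA_def]
    ring
  -- rewrite A with hK
  set A2 : ℕ × ℕ → ℂ := fun q =>
    ((s q.2 : ℂ) * ⟪b q.2, x⟫_ℂ) * (⟪y, c q.1⟫_ℂ * ⟪c q.1, b q.2⟫_ℂ) with hA2_def
  have hAA2 : A = A2 := by
    funext q
    simp only [hA_def, hA2_def]
    linear_combination (⟪y, c q.1⟫_ℂ * ⟪b q.2, x⟫_ℂ) * hK q.1 q.2
  have hA2 : Summable A2 := hAA2 ▸ hA
  -- swap and sum over i first
  have hA2swap : Summable fun q : ℕ × ℕ => A2 (q.2, q.1) := by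
    have := (Equiv.prodComm ℕ ℕ).summable_iff.mpr hA2
    exact this
  have hswap_eq : (∑' q : ℕ × ℕ, A2 q) = ∑' q : ℕ × ℕ, A2 (q.2, q.1) := by
    rw [← (Equiv.prodComm ℕ ℕ).tsum_eq A2]
    rfl
  have hA2row : ∀ j, Summable fun i => A2 (i, j) := by
    intro j
    exact (c.summable_inner_mul_inner y (b j)).mul_left ((s j : ℂ) * ⟪b j, x⟫_ℂ)
  have hRHS : (∑' q : ℕ × ℕ, A2 (q.2, q.1))
      = ∑' j, (s j : ℂ) * (⟪y, b j⟫_ℂ * ⟪b j, x⟫_ℂ) := by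
    rw [Summable.tsum_prod' hA2swap (fun j => hA2row j)]
    congr 1; funext j
    dsimp only
    have hrowj : (fun i => A2 (i, j)) = (fun i =>
        ((s j : ℂ) * ⟪b j, x⟫_ℂ) * (⟪y, c i⟫_ℂ * ⟪c i, b j⟫_ℂ)) := rfl
    rw [hrowj, tsum_mul_left, c.tsum_inner_mul_inner y (b j)]
    ring
  rw [hLHS, hAA2, hswap_eq, hRHS]
end

section
/- Let H be a separable Hilbert space and A a self-adjoint operator with compact resolvent, with eigenvalues (μ_n) arranged nondecreasingly tending to +∞ and A ≥ c·Id for some c > -1. Let (ρ_m) be a sequence of states (nonnegative, trace class, trace one) with Tr(A^{1/2} ρ_m A^{1/2}) ≤ C uniformly, converging weak-* in trace class to a trace-class operator ρ and such that A^{1/2} ρ_m A^{1/2} converges weak-* in trace class. Then Tr(ρ_m) → Tr(ρ), hence ρ is a state and ρ_m → ρ in trace norm. -/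
open Filter Topology
open scoped InnerProductSpace ENNReal

/-- The trace norm of a bounded operator, characterized as the supremum over pairs of
finite orthonormal families `(e_i)`, `(f_i)` of `∑ |⟨e_i, T f_i⟩|`. -/
noncomputable def traceNorm {H : Type*} [NormedAddCommGroup H]
    [InnerProductSpace ℂ H] (T : H →L[ℂ] H) : ℝ≥0∞ :=
  ⨆ (n : ℕ) (e : Fin n → H) (f : Fin n → H) (_ : Orthonormal ℂ e)
    (_ : Orthonormal ℂ f), ∑ i, (‖⟪e i, T (f i)⟫_ℂ‖₊ : ℝ≥0∞)


/-!
Testing the weak-* convergence against the rank-one operators `x ↦ ⟪v, x⟫ u` gives convergence of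
every matrix entry `⟪u, ρ_m v⟫`, hence positivity of `ρ`. The energy bound is a Markov inequality
for the diagonal: with the weights `μ_i - μ_0 + 1 ≥ 1`, the mass of `ρ_m` outside the first `N`
basis vectors is at most `(C - μ_0 + 1) / (μ_N - μ_0 + 1)`, uniformly in `m`, so no mass escapes
and `Tr ρ = 1`.

For the trace norm, let `P` project onto the first `N` basis vectors and split `ρ_m - ρ` into
`ρ_m - P ρ_m P`, `ρ - P ρ P` and the finite block `P (ρ_m - ρ) P`, which tends to `0` entrywise.
A positive `T = S⋆ S` satisfies `T - P T P = (S (1 - P))⋆ S + (S P)⋆ S (1 - P)`, so Cauchy–Schwarz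
and the basis independence of the Hilbert–Schmidt norm bound its trace norm by
`2 √(Tr T) √(Tr T - ∑_{i<N} ⟪b_i, T b_i⟫)`, which is small uniformly in `m` by tightness.
-/

open Finset InnerProductSpace ContinuousLinearMap
open scoped ComplexOrder

section

variable {ι H : Type*} [NormedAddCommGroup H] [InnerProductSpace ℂ H]

lemma sum_nnnorm_inner_le_traceNorm (T : H →L[ℂ] H) {n : ℕ} {e f : Fin n → H}
    (he : Orthonormal ℂ e) (hf : Orthonormal ℂ f) :
    ∑ i, (‖⟪e i, T (f i)⟫_ℂ‖₊ : ℝ≥0∞) ≤ traceNorm T :=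
  le_iSup_of_le n <| le_iSup₂_of_le e f <| le_iSup₂_of_le he hf le_rfl

lemma traceNorm_le {T : H →L[ℂ] H} {r : ℝ≥0∞}
    (h : ∀ (n : ℕ) (e f : Fin n → H), Orthonormal ℂ e → Orthonormal ℂ f →
      ∑ i, (‖⟪e i, T (f i)⟫_ℂ‖₊ : ℝ≥0∞) ≤ r) :
    traceNorm T ≤ r :=
  iSup_le fun n => iSup₂_le fun e f => iSup₂_le fun he hf => h n e f he hf

lemma traceNorm_le_ofReal {T : H →L[ℂ] H} {δ : ℝ}
    (h : ∀ (n : ℕ) (e f : Fin n → H), Orthonormal ℂ e → Orthonormal ℂ f →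
      ∑ i, ‖⟪e i, T (f i)⟫_ℂ‖ ≤ δ) :
    traceNorm T ≤ ENNReal.ofReal δ :=
  traceNorm_le fun n e f he hf => by
    have h' := ENNReal.ofReal_le_ofReal (h n e f he hf)
    simp only [ENNReal.ofReal_sum_of_nonneg fun i _ => norm_nonneg _, ofReal_norm] at h'
    exact h'

@[simp] lemma traceNorm_zero : traceNorm (0 : H →L[ℂ] H) = 0 := by
  simp [traceNorm]

@[simp] lemma traceNorm_neg (T : H →L[ℂ] H) : traceNorm (-T) = traceNorm T := by
  simp [traceNorm]

lemma traceNorm_add_le (S T : H →L[ℂ] H) : traceNorm (S + T) ≤ traceNorm S + traceNorm T :=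
  traceNorm_le fun n e f he hf => calc
    ∑ i, (‖⟪e i, (S + T) (f i)⟫_ℂ‖₊ : ℝ≥0∞)
      ≤ ∑ i, ((‖⟪e i, S (f i)⟫_ℂ‖₊ : ℝ≥0∞) + ‖⟪e i, T (f i)⟫_ℂ‖₊) :=
        sum_le_sum fun i _ => by
          rw [add_apply, inner_add_right]; exact_mod_cast nnnorm_add_le _ _
    _ ≤ traceNorm S + traceNorm T := by
        rw [sum_add_distrib]
        exact add_le_add (sum_nnnorm_inner_le_traceNorm S he hf)
          (sum_nnnorm_inner_le_traceNorm T he hf)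

lemma traceNorm_sub_le (S T : H →L[ℂ] H) : traceNorm (S - T) ≤ traceNorm S + traceNorm T := by
  simpa [sub_eq_add_neg] using traceNorm_add_le S (-T)

lemma traceNorm_sum_le (s : Finset ι) (T : ι → H →L[ℂ] H) :
    traceNorm (∑ i ∈ s, T i) ≤ ∑ i ∈ s, traceNorm (T i) :=
  le_sum_of_subadditive (traceNorm (H := H)) traceNorm_zero.le traceNorm_add_le s T

lemma traceNorm_smul_le (c : ℂ) (T : H →L[ℂ] H) : traceNorm (c • T) ≤ ‖c‖ₑ * traceNorm T :=
  traceNorm_le fun n e f he hf => by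
    simp only [smul_apply, inner_smul_right, nnnorm_mul, ENNReal.coe_mul, ← mul_sum]
    exact mul_le_mul' le_rfl (sum_nnnorm_inner_le_traceNorm T he hf)

lemma traceNorm_sub_le_of_comp (P S T : H →L[ℂ] H) :
    traceNorm (S - T) ≤ traceNorm (S - P ∘L S ∘L P) + traceNorm (T - P ∘L T ∘L P) +
      traceNorm (P ∘L (S - T) ∘L P) := by
  have h : S - T = (S - P ∘L S ∘L P) - (T - P ∘L T ∘L P) + P ∘L (S - T) ∘L P := by
    ext x; simp only [sub_apply, add_apply, comp_apply, map_sub]; abel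
  calc traceNorm (S - T)
      = traceNorm ((S - P ∘L S ∘L P) - (T - P ∘L T ∘L P) + P ∘L (S - T) ∘L P) := congrArg _ h
    _ ≤ traceNorm ((S - P ∘L S ∘L P) - (T - P ∘L T ∘L P)) + traceNorm (P ∘L (S - T) ∘L P) :=
        traceNorm_add_le _ _
    _ ≤ _ := add_le_add (traceNorm_sub_le _ _) le_rfl

lemma Orthonormal.sum_norm_inner_mul_norm_inner_le {n : ℕ} {e f : Fin n → H}
    (he : Orthonormal ℂ e) (hf : Orthonormal ℂ f) (u v : H) :
    ∑ i, ‖⟪e i, u⟫_ℂ‖ * ‖⟪f i, v⟫_ℂ‖ ≤ ‖u‖ * ‖v‖ :=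
  (Real.sum_mul_le_sqrt_mul_sqrt _ _ _).trans <| mul_le_mul
    ((Real.sqrt_le_sqrt (he.sum_inner_products_le u)).trans_eq (Real.sqrt_sq (norm_nonneg _)))
    ((Real.sqrt_le_sqrt (hf.sum_inner_products_le v)).trans_eq (Real.sqrt_sq (norm_nonneg _)))
    (Real.sqrt_nonneg _) (norm_nonneg _)

lemma traceNorm_rankOne_le (u v : H) :
    traceNorm (rankOne ℂ u v) ≤ ENNReal.ofReal (‖u‖ * ‖v‖) :=
  traceNorm_le_ofReal fun n e f he hf => by
    simpa only [inner_right_rankOne_apply, norm_mul, norm_inner_symm v]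
      using he.sum_norm_inner_mul_norm_inner_le hf u v

lemma isCompactOperator_rankOne (u v : H) : IsCompactOperator (rankOne ℂ u v) :=
  (isCompactOperator_of_locallyCompactSpace_rng (toSpanSingleton ℂ u)).comp_clm (innerSL ℂ v)

lemma HilbertBasis.tsum_inner_comp_rankOne (b : HilbertBasis ι ℂ H) (A : H →L[ℂ] H) (u v : H) :
    ∑' i, ⟪b i, (A ∘L rankOne ℂ u v) (b i)⟫_ℂ = ⟪v, A u⟫_ℂ := by
  simp_rw [comp_rankOne, inner_right_rankOne_apply, mul_comm ⟪b _, _⟫_ℂ]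
  exact b.tsum_inner_mul_inner v (A u)

lemma HilbertBasis.tendsto_inner_apply_of_tendsto_tsum_comp {α : Type*} {l : Filter α}
    (b : HilbertBasis ι ℂ H) {T : α → H →L[ℂ] H} {T₀ : H →L[ℂ] H}
    (h : ∀ K : H →L[ℂ] H, IsCompactOperator K → Tendsto (fun m => ∑' i, ⟪b i, (T m ∘L K) (b i)⟫_ℂ)
      l (𝓝 (∑' i, ⟪b i, (T₀ ∘L K) (b i)⟫_ℂ)))
    (u v : H) : Tendsto (fun m => ⟪u, T m v⟫_ℂ) l (𝓝 ⟪u, T₀ v⟫_ℂ) := by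
  simpa only [b.tsum_inner_comp_rankOne] using h _ (isCompactOperator_rankOne v u)

lemma isPositive_of_tendsto_inner {α : Type*} {l : Filter α} [l.NeBot] {T : α → H →L[ℂ] H}
    {T₀ : H →L[ℂ] H} (hT : ∀ m, (T m).IsPositive)
    (h : ∀ x, Tendsto (fun m => ⟪x, T m x⟫_ℂ) l (𝓝 ⟪x, T₀ x⟫_ℂ)) : T₀.IsPositive := by
  rw [isPositive_iff_complex]
  intro x
  have hx : 0 ≤ ⟪T₀ x, x⟫_ℂ := by
    rw [← inner_conj_symm]
    exact star_nonneg_iff.mpr <| ge_of_tendsto' (h x) fun m => (hT m).inner_nonneg_right x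
  obtain ⟨hre, him⟩ := RCLike.nonneg_iff.mp hx
  exact ⟨Complex.ext (by simp) (by simpa using him.symm), hre⟩

lemma ContinuousLinearMap.IsPositive.exists_inner_eq [CompleteSpace H] {T : H →L[ℂ] H}
    (hT : T.IsPositive) : ∃ S : H →L[ℂ] H, ∀ x y, ⟪x, T y⟫_ℂ = ⟪S x, S y⟫_ℂ := by
  obtain ⟨S, rfl⟩ :=
    CStarAlgebra.nonneg_iff_eq_star_mul_self.mp ((nonneg_iff_isPositive T).mpr hT)
  exact ⟨S, fun x y => by rw [star_eq_adjoint]; exact adjoint_inner_right S x (S y)⟩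

lemma enorm_inner_symm (x y : H) : ‖⟪x, y⟫_ℂ‖ₑ = ‖⟪y, x⟫_ℂ‖ₑ := by
  simp only [← ofReal_norm, norm_inner_symm x y]

lemma Orthonormal.tsum_enorm_inner_sq_le {κ : Type*} {f : κ → H} (hf : Orthonormal ℂ f)
    (x : H) : ∑' i, ‖⟪f i, x⟫_ℂ‖ₑ ^ 2 ≤ ‖x‖ₑ ^ 2 := by
  simp_rw [← ofReal_norm, ← ENNReal.ofReal_pow (norm_nonneg _)]
  rw [← ENNReal.ofReal_tsum_of_nonneg (fun i => by positivity) (hf.inner_products_summable x)]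
  exact ENNReal.ofReal_le_ofReal (hf.tsum_inner_products_le x)

namespace HilbertBasis

variable (b : HilbertBasis ι ℂ H)

lemma hasSum_norm_inner_sq (x : H) : HasSum (fun i => ‖⟪b i, x⟫_ℂ‖ ^ 2) (‖x‖ ^ 2) := by
  have h := b.hasSum_inner_mul_inner x x
  simp_rw [← inner_conj_symm x (b _), Complex.conj_mul', inner_self_eq_norm_sq_to_K] at h
  refine Complex.hasSum_ofReal.mp ?_
  push_cast
  exact h

lemma tsum_enorm_inner_sq (x : H) : ∑' i, ‖⟪b i, x⟫_ℂ‖ₑ ^ 2 = ‖x‖ₑ ^ 2 := by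
  have h := b.hasSum_norm_inner_sq x
  simp_rw [← ofReal_norm, ← ENNReal.ofReal_pow (norm_nonneg _)]
  rw [← ENNReal.ofReal_tsum_of_nonneg (fun i => by positivity) h.summable, h.tsum_eq]

section Complete

variable [CompleteSpace H]

lemma tsum_enorm_adjoint_apply_sq (X : H →L[ℂ] H) :
    ∑' j, ‖adjoint X (b j)‖ₑ ^ 2 = ∑' j, ‖X (b j)‖ₑ ^ 2 := by
  simp_rw [← b.tsum_enorm_inner_sq, adjoint_inner_right]
  rw [ENNReal.tsum_comm]
  simp_rw [← enorm_inner_symm]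

lemma tsum_enorm_apply_sq_le (X : H →L[ℂ] H) {κ : Type*} {f : κ → H} (hf : Orthonormal ℂ f) :
    ∑' i, ‖X (f i)‖ₑ ^ 2 ≤ ∑' j, ‖X (b j)‖ₑ ^ 2 := calc
  ∑' i, ‖X (f i)‖ₑ ^ 2 = ∑' j, ∑' i, ‖⟪f i, adjoint X (b j)⟫_ℂ‖ₑ ^ 2 := by
    simp_rw [← b.tsum_enorm_inner_sq, ← adjoint_inner_left X, ← enorm_inner_symm (adjoint X _)]
    exact ENNReal.tsum_comm
  _ ≤ ∑' j, ‖adjoint X (b j)‖ₑ ^ 2 := ENNReal.tsum_le_tsum fun j => hf.tsum_enorm_inner_sq_le _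
  _ = ∑' j, ‖X (b j)‖ₑ ^ 2 := b.tsum_enorm_adjoint_apply_sq X

lemma sum_norm_apply_sq_le {X : H →L[ℂ] H} {a : ℝ} (hX : HasSum (fun j => ‖X (b j)‖ ^ 2) a)
    {κ : Type*} [Fintype κ] {f : κ → H} (hf : Orthonormal ℂ f) : ∑ i, ‖X (f i)‖ ^ 2 ≤ a := by
  have h := b.tsum_enorm_apply_sq_le X hf
  simp_rw [tsum_fintype, ← ofReal_norm, ← ENNReal.ofReal_pow (norm_nonneg _)] at h
  rwa [← ENNReal.ofReal_sum_of_nonneg (fun i _ => by positivity),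
    ← ENNReal.ofReal_tsum_of_nonneg (fun i => by positivity) hX.summable, hX.tsum_eq,
    ENNReal.ofReal_le_ofReal_iff (hX.nonneg fun j => by positivity)] at h

lemma sum_norm_inner_apply_le {A B : H →L[ℂ] H} {a c : ℝ}
    (hA : HasSum (fun j => ‖A (b j)‖ ^ 2) a) (hB : HasSum (fun j => ‖B (b j)‖ ^ 2) c)
    {n : ℕ} {e f : Fin n → H} (he : Orthonormal ℂ e) (hf : Orthonormal ℂ f) :
    ∑ i, ‖⟪A (e i), B (f i)⟫_ℂ‖ ≤ √a * √c := calc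
  ∑ i, ‖⟪A (e i), B (f i)⟫_ℂ‖ ≤ ∑ i, ‖A (e i)‖ * ‖B (f i)‖ :=
    sum_le_sum fun i _ => norm_inner_le_norm _ _
  _ ≤ √(∑ i, ‖A (e i)‖ ^ 2) * √(∑ i, ‖B (f i)‖ ^ 2) := Real.sum_mul_le_sqrt_mul_sqrt _ _ _
  _ ≤ √a * √c := by gcongr; exacts [b.sum_norm_apply_sq_le hA he, b.sum_norm_apply_sq_le hB hf]

end Complete

variable (s : Finset ι)

noncomputable def finsetProj : H →L[ℂ] H := ∑ j ∈ s, rankOne ℂ (b j) (b j)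

lemma finsetProj_apply (x : H) : b.finsetProj s x = ∑ j ∈ s, ⟪b j, x⟫_ℂ • b j := by
  simp [finsetProj]

lemma finsetProj_apply_self {k : ι} (hk : k ∈ s) : b.finsetProj s (b k) = b k := by
  classical
  simp [finsetProj_apply, orthonormal_iff_ite.mp b.orthonormal, hk]

lemma finsetProj_apply_of_notMem {k : ι} (hk : k ∉ s) : b.finsetProj s (b k) = 0 := by
  classical
  simp [finsetProj_apply, orthonormal_iff_ite.mp b.orthonormal, hk]

lemma inner_finsetProj_left (x y : H) : ⟪b.finsetProj s x, y⟫_ℂ = ⟪x, b.finsetProj s y⟫_ℂ := by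
  simp only [finsetProj_apply, sum_inner, inner_sum, inner_smul_left, inner_smul_right,
    inner_conj_symm, mul_comm]

lemma hasSum_norm_comp_finsetProj_apply_sq (S : H →L[ℂ] H) :
    HasSum (fun j => ‖(S ∘L b.finsetProj s) (b j)‖ ^ 2) (∑ j ∈ s, ‖S (b j)‖ ^ 2) := by
  have h : HasSum (fun j => ‖(S ∘L b.finsetProj s) (b j)‖ ^ 2)
      (∑ j ∈ s, ‖(S ∘L b.finsetProj s) (b j)‖ ^ 2) :=
    hasSum_sum_of_ne_finset_zero fun j hj => by simp [finsetProj_apply_of_notMem b s hj]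
  rwa [sum_congr rfl fun j hj => by rw [comp_apply, finsetProj_apply_self b s hj]] at h

lemma hasSum_norm_comp_one_sub_finsetProj_apply_sq {S : H →L[ℂ] H} {t : ℝ}
    (hS : HasSum (fun j => ‖S (b j)‖ ^ 2) t) :
    HasSum (fun j => ‖(S ∘L (1 - b.finsetProj s)) (b j)‖ ^ 2) (t - ∑ j ∈ s, ‖S (b j)‖ ^ 2) := by
  refine (hS.sub (b.hasSum_norm_comp_finsetProj_apply_sq s S)).congr_fun fun j => ?_
  by_cases hj : j ∈ s
  · simp [finsetProj_apply_self b s hj]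
  · simp [finsetProj_apply_of_notMem b s hj]

lemma finsetProj_comp_comp_finsetProj (X : H →L[ℂ] H) :
    b.finsetProj s ∘L X ∘L b.finsetProj s =
      ∑ j ∈ s, ∑ k ∈ s, ⟪b j, X (b k)⟫_ℂ • rankOne ℂ (b j) (b k) := by
  ext y
  simp only [comp_apply, finsetProj_apply, map_sum, map_smul, smul_sum, smul_smul,
    _root_.sum_apply, smul_apply, rankOne_apply]
  rw [sum_comm]
  simp only [mul_comm]

lemma traceNorm_finsetProj_comp_comp_finsetProj_le (X : H →L[ℂ] H) :
    traceNorm (b.finsetProj s ∘L X ∘L b.finsetProj s) ≤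
      ∑ j ∈ s, ∑ k ∈ s, ‖⟪b j, X (b k)⟫_ℂ‖ₑ := by
  rw [finsetProj_comp_comp_finsetProj]
  refine (traceNorm_sum_le _ _).trans <| sum_le_sum fun j _ => ?_
  refine (traceNorm_sum_le _ _).trans <| sum_le_sum fun k _ => ?_
  refine (traceNorm_smul_le _ _).trans ?_
  calc ‖⟪b j, X (b k)⟫_ℂ‖ₑ * traceNorm (rankOne ℂ (b j) (b k))
      ≤ ‖⟪b j, X (b k)⟫_ℂ‖ₑ * 1 := by
        gcongr; simpa [b.orthonormal.1] using traceNorm_rankOne_le (b j) (b k)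
    _ = ‖⟪b j, X (b k)⟫_ℂ‖ₑ := mul_one _

lemma traceNorm_sub_finsetProj_comp_comp_finsetProj_le [CompleteSpace H] {T : H →L[ℂ] H}
    (hT : T.IsPositive) {t : ℝ} (ht : HasSum (fun j => (⟪b j, T (b j)⟫_ℂ).re) t) :
    traceNorm (T - b.finsetProj s ∘L T ∘L b.finsetProj s) ≤
      ENNReal.ofReal (2 * √t * √(t - ∑ j ∈ s, (⟪b j, T (b j)⟫_ℂ).re)) := by
  obtain ⟨S, hS⟩ := hT.exists_inner_eq
  set P := b.finsetProj s
  have hSd : ∀ j, ‖S (b j)‖ ^ 2 = (⟪b j, T (b j)⟫_ℂ).re := fun j => by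
    simp [hS, ← inner_self_eq_norm_sq (𝕜 := ℂ)]
  have hS' : HasSum (fun j => ‖S (b j)‖ ^ 2) t := by simpa only [hSd] using ht
  have hSP := b.hasSum_norm_comp_finsetProj_apply_sq s S
  have hSQ := b.hasSum_norm_comp_one_sub_finsetProj_apply_sq s hS'
  simp only [hSd] at hSP hSQ
  have hsplit : ∀ x y, ⟪x, (T - P ∘L T ∘L P) y⟫_ℂ =
      ⟪(S ∘L (1 - P)) x, S y⟫_ℂ + ⟪(S ∘L P) x, (S ∘L (1 - P)) y⟫_ℂ := fun x y => by
    simp only [sub_apply, comp_apply, one_apply_eq_self, map_sub, inner_sub_left,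
      inner_sub_right, ← hS, P, inner_finsetProj_left]
    ring
  set τ := t - ∑ j ∈ s, (⟪b j, T (b j)⟫_ℂ).re
  have hts : √(∑ j ∈ s, (⟪b j, T (b j)⟫_ℂ).re) ≤ √t :=
    Real.sqrt_le_sqrt (sum_le_hasSum s (fun j _ => hT.re_inner_nonneg_right _) ht)
  refine traceNorm_le_ofReal fun n e f he hf => ?_
  calc ∑ i, ‖⟪e i, (T - P ∘L T ∘L P) (f i)⟫_ℂ‖
      ≤ ∑ i, ‖⟪(S ∘L (1 - P)) (e i), S (f i)⟫_ℂ‖ +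
          ∑ i, ‖⟪(S ∘L P) (e i), (S ∘L (1 - P)) (f i)⟫_ℂ‖ := by
        simp_rw [hsplit, ← sum_add_distrib]
        exact sum_le_sum fun i _ => norm_add_le _ _
    _ ≤ √τ * √t + √(∑ j ∈ s, (⟪b j, T (b j)⟫_ℂ).re) * √τ :=
        add_le_add (b.sum_norm_inner_apply_le hSQ hS' he hf)
          (b.sum_norm_inner_apply_le hSP hSQ he hf)
    _ ≤ 2 * √t * √τ := by nlinarith [Real.sqrt_nonneg τ]

end HilbertBasis

lemma mul_sub_sum_range_le_tsum {w d : ℕ → ℝ} {t : ℝ} (hw : Monotone w) (hw0 : ∀ i, 0 ≤ w i)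
    (hd : ∀ i, 0 ≤ d i) (ht : HasSum d t) (hwd : Summable fun i => w i * d i) (N : ℕ) :
    w N * (t - ∑ i ∈ range N, d i) ≤ ∑' i, w i * d i := by
  have htail : t - ∑ i ∈ range N, d i = ∑' i, d (i + N) := by
    rw [← ht.tsum_eq, ← ht.summable.sum_add_tsum_nat_add N]; ring
  calc w N * (t - ∑ i ∈ range N, d i) = ∑' i, w N * d (i + N) := by rw [htail, tsum_mul_left]
    _ ≤ ∑' i, w (i + N) * d (i + N) :=
        Summable.tsum_le_tsum (fun i => mul_le_mul_of_nonneg_right (hw (by omega)) (hd _))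
          (((summable_nat_add_iff N).mpr ht.summable).mul_left _)
          ((summable_nat_add_iff N).mpr hwd)
    _ ≤ ∑' i, w i * d i := by
        rw [← hwd.sum_add_tsum_nat_add N]
        exact le_add_of_nonneg_left (sum_nonneg fun i _ => mul_nonneg (hw0 i) (hd i))

lemma one_sub_div_le_sum_range {μ d : ℕ → ℝ} {C : ℝ} (hμ : Monotone μ) (hd : ∀ i, 0 ≤ d i)
    (h1 : HasSum d 1) (hE : Summable fun i => μ i * d i) (hC : ∑' i, μ i * d i ≤ C) (N : ℕ) :
    1 - (C - μ 0 + 1) / (μ N - μ 0 + 1) ≤ ∑ i ∈ range N, d i := by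
  set w := fun i => μ i - μ 0 + 1
  have hw1 : ∀ i, 1 ≤ w i := fun i => by simp only [w]; linarith [hμ (Nat.zero_le i)]
  have hw : Monotone w := fun i j hij => by simp only [w]; linarith [hμ hij]
  have hwd : HasSum (fun i => w i * d i) (∑' i, μ i * d i + (1 - μ 0) * 1) :=
    (hE.hasSum.add (h1.mul_left (1 - μ 0))).congr_fun fun i => by simp only [w]; ring
  have h := mul_sub_sum_range_le_tsum hw (fun i => zero_le_one.trans (hw1 i)) hd h1 hwd.summable N
  rw [hwd.tsum_eq] at h
  rw [sub_le_comm, le_div_iff₀ (by linarith [hw1 N])]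
  simp only [w] at h
  linarith

lemma hasSum_of_sum_range_squeeze {l β : ℕ → ℝ} {t : ℝ} (hl : ∀ i, 0 ≤ l i)
    (hβ : Tendsto β atTop (𝓝 0)) (hlo : ∀ N, t - β N ≤ ∑ i ∈ range N, l i)
    (hhi : ∀ N, ∑ i ∈ range N, l i ≤ t) : HasSum l t :=
  (hasSum_iff_tendsto_nat_of_nonneg hl t).mpr <| tendsto_of_tendsto_of_tendsto_of_le_of_le
    (by simpa using tendsto_const_nhds.sub hβ) tendsto_const_nhds hlo hhi

lemma tendsto_zero_of_forall_le_add {α : Type*} {F : Filter α} {a : α → ℝ≥0∞}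
    {u : ℕ → ℝ≥0∞} {v : ℕ → α → ℝ≥0∞} (hu : Tendsto u atTop (𝓝 0))
    (hv : ∀ N, Tendsto (v N) F (𝓝 0)) (h : ∀ N x, a x ≤ u N + v N x) : Tendsto a F (𝓝 0) := by
  rw [ENNReal.tendsto_nhds_zero] at hu ⊢
  intro ε hε
  obtain ⟨N, hN⟩ := (hu (ε / 2) (ENNReal.half_pos hε.ne')).exists
  filter_upwards [ENNReal.tendsto_nhds_zero.mp (hv N) (ε / 2) (ENNReal.half_pos hε.ne')] with x hx
  calc a x ≤ u N + v N x := h N x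
    _ ≤ ε / 2 + ε / 2 := add_le_add hN hx
    _ = ε := ENNReal.add_halves ε

theorem HilbertBasis.tendsto_traceNorm_sub [CompleteSpace H] {α : Type*} {F : Filter α}
    (b : HilbertBasis ℕ ℂ H) {T : α → H →L[ℂ] H} {T₀ : H →L[ℂ] H} {β : ℕ → ℝ}
    (hT : ∀ m, (T m).IsPositive) (hT₀ : T₀.IsPositive)
    (h1 : ∀ m, HasSum (fun i => (⟪b i, T m (b i)⟫_ℂ).re) 1)
    (h1₀ : HasSum (fun i => (⟪b i, T₀ (b i)⟫_ℂ).re) 1) (hβ : Tendsto β atTop (𝓝 0))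
    (htight : ∀ m N, 1 - β N ≤ ∑ i ∈ range N, (⟪b i, T m (b i)⟫_ℂ).re)
    (hentry : ∀ j k, Tendsto (fun m => ⟪b j, T m (b k)⟫_ℂ) F (𝓝 ⟪b j, T₀ (b k)⟫_ℂ)) :
    Tendsto (fun m => traceNorm (T m - T₀)) F (𝓝 0) := by
  set γ := fun N => 1 - ∑ i ∈ range N, (⟪b i, T₀ (b i)⟫_ℂ).re
  have hγ : Tendsto γ atTop (𝓝 0) := by
    simpa using (tendsto_const_nhds (x := (1 : ℝ))).sub h1₀.tendsto_sum_nat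
  have hblock : ∀ N, Tendsto (fun m => ∑ j ∈ range N, ∑ k ∈ range N,
      ‖⟪b j, (T m - T₀) (b k)⟫_ℂ‖ₑ) F (𝓝 0) := fun N => by
    have h : ∀ j k, Tendsto (fun m => ‖⟪b j, (T m - T₀) (b k)⟫_ℂ‖ₑ) F (𝓝 0) := fun j k => by
      simpa [inner_sub_right] using ((hentry j k).sub_const ⟪b j, T₀ (b k)⟫_ℂ).enorm
    simpa using tendsto_finsetSum _ fun j _ => tendsto_finsetSum _ fun k _ => h j k
  refine tendsto_zero_of_forall_le_add
    (u := fun N => ENNReal.ofReal (2 * √(β N)) + ENNReal.ofReal (2 * √(γ N))) ?_ hblock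
    fun N m => ?_
  · simpa using (ENNReal.tendsto_ofReal (hβ.sqrt.const_mul 2)).add
      (ENNReal.tendsto_ofReal (hγ.sqrt.const_mul 2))
  refine (traceNorm_sub_le_of_comp (b.finsetProj (range N)) _ _).trans <|
    add_le_add (add_le_add ?_ ?_) (b.traceNorm_finsetProj_comp_comp_finsetProj_le _ _)
  · refine (b.traceNorm_sub_finsetProj_comp_comp_finsetProj_le _ (hT m) (h1 m)).trans ?_
    gcongr
    · simp
    · linarith [htight m N]
  · refine (b.traceNorm_sub_finsetProj_comp_comp_finsetProj_le _ hT₀ h1₀).trans ?_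
    simp [γ]

end

theorem stmt8_general {H : Type*} [NormedAddCommGroup H] [InnerProductSpace ℂ H]
    [CompleteSpace H] (b : HilbertBasis ℕ ℂ H) (μ : ℕ → ℝ) (C : ℝ)
    (hμmono : Monotone μ) (hμinf : Tendsto μ atTop atTop)
    (ρm : ℕ → H →L[ℂ] H) (ρ : H →L[ℂ] H)
    (hpos : ∀ m, (ρm m).IsPositive)
    (htr1 : ∀ m, HasSum (fun i => (⟪b i, ρm m (b i)⟫_ℂ).re) 1)
    (hEsum : ∀ m, Summable fun i => μ i * (⟪b i, ρm m (b i)⟫_ℂ).re)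
    (hEbd : ∀ m, ∑' i, μ i * (⟪b i, ρm m (b i)⟫_ℂ).re ≤ C)
    (hweak : ∀ K : H →L[ℂ] H, IsCompactOperator K →
      Tendsto (fun m => ∑' i, ⟪b i, ((ρm m) ∘L K) (b i)⟫_ℂ) atTop
        (𝓝 (∑' i, ⟪b i, (ρ ∘L K) (b i)⟫_ℂ))) :
    Tendsto (fun m => ∑' i, (⟪b i, ρm m (b i)⟫_ℂ).re) atTop
        (𝓝 (∑' i, (⟪b i, ρ (b i)⟫_ℂ).re)) ∧
      ρ.IsPositive ∧ HasSum (fun i => (⟪b i, ρ (b i)⟫_ℂ).re) 1 ∧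
      Tendsto (fun m => traceNorm (ρm m - ρ)) atTop (𝓝 0) := by
  have hentry := b.tendsto_inner_apply_of_tendsto_tsum_comp hweak
  have hρpos : ρ.IsPositive := isPositive_of_tendsto_inner hpos fun x => hentry x x
  set β := fun N => (C - μ 0 + 1) / (μ N - μ 0 + 1)
  have hβ : Tendsto β atTop (𝓝 0) := tendsto_const_nhds.div_atTop <|
    tendsto_atTop_add_const_right _ 1 (tendsto_atTop_add_const_right _ (-μ 0) hμinf)
  have htight : ∀ m N, 1 - β N ≤ ∑ i ∈ range N, (⟪b i, ρm m (b i)⟫_ℂ).re := fun m =>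
    one_sub_div_le_sum_range hμmono (fun i => (hpos m).re_inner_nonneg_right _) (htr1 m)
      (hEsum m) (hEbd m)
  have hpartial : ∀ N, Tendsto (fun m => ∑ i ∈ range N, (⟪b i, ρm m (b i)⟫_ℂ).re) atTop
      (𝓝 (∑ i ∈ range N, (⟪b i, ρ (b i)⟫_ℂ).re)) := fun N =>
    tendsto_finsetSum _ fun i _ => (Complex.continuous_re.tendsto _).comp (hentry _ _)
  have hρ1 : HasSum (fun i => (⟪b i, ρ (b i)⟫_ℂ).re) 1 :=
    hasSum_of_sum_range_squeeze (fun i => hρpos.re_inner_nonneg_right _) hβ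
      (fun N => ge_of_tendsto' (hpartial N) fun m => htight m N)
      (fun N => le_of_tendsto' (hpartial N) fun m =>
        sum_le_hasSum _ (fun i _ => (hpos m).re_inner_nonneg_right _) (htr1 m))
  refine ⟨?_, hρpos, hρ1, b.tendsto_traceNorm_sub hpos hρpos htr1 hρ1 hβ htight
    fun j k => hentry _ _⟩
  simp only [(htr1 _).tsum_eq, hρ1.tsum_eq, tendsto_const_nhds]

/-- Key compactness step of Lemma 4.3.  The self-adjoint operator `A` with compact
resolvent is described by its eigenbasis `b` and eigenvalues `μ_n`, nondecreasing and
tending to `+∞`, with `A ≥ c·Id` for some `c > -1`.  States `ρ_m` with a uniform bound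
`Tr(A^{1/2} ρ_m A^{1/2}) = ∑_i μ_i ⟨b_i, ρ_m b_i⟩ ≤ C` converging weak-* in trace class
(i.e. tested against compact operators) to a trace-class `ρ`, and such that
`A^{1/2} ρ_m A^{1/2}` converges weak-* in trace class, satisfy `Tr ρ_m → Tr ρ`; hence `ρ`
is a state and `ρ_m → ρ` in trace norm. -/
theorem stmt8 {H : Type*} [NormedAddCommGroup H] [InnerProductSpace ℂ H]
    [CompleteSpace H] (b : HilbertBasis ℕ ℂ H) (μ : ℕ → ℝ) (c C : ℝ)
    (hμmono : Monotone μ) (hμinf : Tendsto μ atTop atTop)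
    (hμc : ∀ n, c ≤ μ n) (hc : -1 < c)
    (ρm : ℕ → H →L[ℂ] H) (ρ : H →L[ℂ] H)
    (hpos : ∀ m, (ρm m).IsPositive) (htc : ∀ m, traceNorm (ρm m) < ⊤)
    (htr1 : ∀ m, HasSum (fun i => (⟪b i, ρm m (b i)⟫_ℂ).re) 1)
    (hEsum : ∀ m, Summable fun i => μ i * (⟪b i, ρm m (b i)⟫_ℂ).re)
    (hEbd : ∀ m, ∑' i, μ i * (⟪b i, ρm m (b i)⟫_ℂ).re ≤ C)
    (htcρ : traceNorm ρ < ⊤)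
    (hweak : ∀ K : H →L[ℂ] H, IsCompactOperator K →
      Tendsto (fun m => ∑' i, ⟪b i, ((ρm m) ∘L K) (b i)⟫_ℂ) atTop
        (𝓝 (∑' i, ⟪b i, (ρ ∘L K) (b i)⟫_ℂ)))
    (hweakA : ∀ K : H →L[ℂ] H, IsCompactOperator K → ∃ l : ℂ,
      Tendsto (fun m => ∑' (p : ℕ × ℕ),
          ((Real.sqrt (μ p.1) * Real.sqrt (μ p.2) : ℝ) : ℂ) *
            ⟪b p.1, (ρm m) (b p.2)⟫_ℂ * ⟪b p.2, K (b p.1)⟫_ℂ) atTop (𝓝 l)) :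
    Tendsto (fun m => ∑' i, (⟪b i, ρm m (b i)⟫_ℂ).re) atTop
        (𝓝 (∑' i, (⟪b i, ρ (b i)⟫_ℂ).re)) ∧
      ρ.IsPositive ∧ HasSum (fun i => (⟪b i, ρ (b i)⟫_ℂ).re) 1 ∧
      Tendsto (fun m => traceNorm (ρm m - ρ)) atTop (𝓝 0) :=
  stmt8_general b μ C hμmono hμinf ρm ρ hpos htr1 hEsum hEbd hweak
end

section
/- Let A be a positive self-adjoint operator on a separable Hilbert space such that e^{-βA} is trace class for every β > 0, let Z(β) = Tr(e^{-βA}), and let σ_β = e^{-βA}/Z(β). For a state ρ with Tr(A^{1/2}ρA^{1/2}) < ∞, the relative entropy satisfies F(ρ, σ_β) = S(ρ) + β·Tr(A^{1/2}ρA^{1/2}) + log Z(β), where S(ρ) = Tr(ρ log ρ). -/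
/-!
Write `q_j = ∑_i r_i |⟨c_i, b_j⟩|²` for the diagonal of `ρ` in the eigenbasis of `A`.
By Parseval each row `j ↦ |⟨c_i, b_j⟩|²` sums to `‖c_i‖² = 1`, so `q` is again a
probability vector (Tonelli for the nonnegative double series). Since
`log (e^{-βμ_j} / Z) = -βμ_j - log Z`, the cross term `∑_j q_j log σ_j` then splits into
`-β ∑_j μ_j q_j - log Z`.
-/

open scoped InnerProductSpace

theorem HilbertBasis.hasSum_norm_inner_sq_s15 {ι 𝕜 E : Type*} [RCLike 𝕜] [NormedAddCommGroup E]
    [InnerProductSpace 𝕜 E] (b : HilbertBasis ι 𝕜 E) (x : E) :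
    HasSum (fun i => ‖⟪x, b i⟫_𝕜‖ ^ 2) (‖x‖ ^ 2) := by
  simpa only [RCLike.reCLM_apply, inner_self_eq_norm_sq, ← inner_conj_symm (b _) x,
    RCLike.mul_conj, ← RCLike.ofReal_pow, RCLike.ofReal_re] using
    (b.hasSum_inner_mul_inner x x).mapL RCLike.reCLM

theorem hasSum_tsum_mul_of_hasSum_one {ι κ : Type*} {r : ι → ℝ} {w : ι → κ → ℝ}
    (hr : ∀ i, 0 ≤ r i) (hrsum : Summable r) (hw : ∀ i j, 0 ≤ w i j)
    (hw_one : ∀ i, HasSum (w i) 1) :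
    HasSum (fun j => ∑' i, r i * w i j) (∑' i, r i) := by
  have hrow : ∀ i, HasSum (fun j => r i * w i j) (r i) := fun i => by
    simpa using (hw_one i).mul_left (r i)
  have hF : HasSum (fun p : ι × κ => r p.1 * w p.1 p.2) (∑' i, r i) := by
    have hsum : Summable (fun p : ι × κ => r p.1 * w p.1 p.2) :=
      (summable_prod_of_nonneg fun p => mul_nonneg (hr _) (hw _ _)).2
        ⟨fun i => (hrow i).summable, by simpa only [(hrow _).tsum_eq] using hrsum⟩
    convert hsum.hasSum using 1
    rw [hsum.tsum_prod' fun i => (hrow i).summable]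
    exact tsum_congr fun i => (hrow i).tsum_eq.symm
  exact ((Equiv.prodComm κ ι).hasSum_iff.2 hF).prod_fiberwise fun j =>
    (hF.summable.comp_injective (Equiv.prodComm κ ι).injective |>.prod_factor j).hasSum

theorem tsum_log_gibbs_mul {ι : Type*} [Nonempty ι] {μ q : ι → ℝ} (β : ℝ)
    (hZ : Summable fun j => Real.exp (-β * μ j)) (hq : HasSum q 1)
    (hμq : Summable fun j => μ j * q j) :
    ∑' j, Real.log (Real.exp (-β * μ j) / ∑' k, Real.exp (-β * μ k)) * q j =
      -β * ∑' j, μ j * q j - Real.log (∑' k, Real.exp (-β * μ k)) := by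
  set Z := ∑' k, Real.exp (-β * μ k)
  have hZpos : 0 < Z :=
    hZ.tsum_pos (fun _ => (Real.exp_pos _).le) (Classical.arbitrary ι) (Real.exp_pos _)
  have hlog : ∀ j, Real.log (Real.exp (-β * μ j) / Z) * q j =
      -β * (μ j * q j) - Real.log Z * q j := fun j => by
    rw [Real.log_div (Real.exp_ne_zero _) hZpos.ne', Real.log_exp]
    ring
  simp only [hlog]
  rw [(hμq.mul_left _).tsum_sub (hq.summable.mul_left _), tsum_mul_left, tsum_mul_left,
    hq.tsum_eq, mul_one]

theorem stmt15_general {H : Type*} [NormedAddCommGroup H] [InnerProductSpace ℂ H]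
    (b c : HilbertBasis ℕ ℂ H) (μ : ℕ → ℝ) (β : ℝ)
    (hZ : Summable fun j => Real.exp (-β * μ j))
    (r : ℕ → ℝ) (hr : ∀ i, 0 ≤ r i) (hrsum : Summable r) (hrtot : ∑' i, r i = 1)
    (hEn : Summable fun j => μ j * ∑' i, r i * ‖⟪c i, b j⟫_ℂ‖ ^ 2) :
    (∑' i, r i * Real.log (r i)) -
        (∑' j, Real.log (Real.exp (-β * μ j) / ∑' k, Real.exp (-β * μ k)) *
          ∑' i, r i * ‖⟪c i, b j⟫_ℂ‖ ^ 2) =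
      (∑' i, r i * Real.log (r i)) +
        β * (∑' j, μ j * ∑' i, r i * ‖⟪c i, b j⟫_ℂ‖ ^ 2) +
        Real.log (∑' j, Real.exp (-β * μ j)) := by
  have hrow : ∀ i, HasSum (fun j => ‖⟪c i, b j⟫_ℂ‖ ^ 2) 1 := fun i => by
    simpa [c.orthonormal.1 i] using b.hasSum_norm_inner_sq_s15 (c i)
  have hq : HasSum (fun j => ∑' i, r i * ‖⟪c i, b j⟫_ℂ‖ ^ 2) 1 :=
    hrtot ▸ hasSum_tsum_mul_of_hasSum_one hr hrsum (fun _ _ => sq_nonneg _) hrow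
  rw [tsum_log_gibbs_mul β hZ hq hEn]
  ring

/-- Relative entropy with respect to a Gibbs state.  The positive self-adjoint `A` is
described by its eigenbasis `b` and eigenvalues `μ_j ≥ 0`, with `Z(β) = ∑ e^{-βμ_j} < ∞`,
so the Gibbs state `σ_β = e^{-βA}/Z(β)` has eigenvalues `e^{-βμ_j}/Z(β)`.  A state `ρ`
has eigenbasis `c` and eigenvalues `r_i ≥ 0` with `∑ r_i = 1`, diagonal entries
`q_j = ⟨b_j, ρ b_j⟩ = ∑_i r_i |⟨c_i, b_j⟩|²` and finite energy
`Tr(A^{1/2} ρ A^{1/2}) = ∑_j μ_j q_j`.  Then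
`F(ρ, σ_β) = Tr(ρ log ρ - ρ log σ_β) = S(ρ) + β Tr(A^{1/2} ρ A^{1/2}) + log Z(β)`. -/
theorem stmt15 {H : Type*} [NormedAddCommGroup H] [InnerProductSpace ℂ H]
    [CompleteSpace H]
    (b c : HilbertBasis ℕ ℂ H) (μ : ℕ → ℝ) (β : ℝ) (hβ : 0 < β)
    (hμ : ∀ j, 0 ≤ μ j)
    (hZ : Summable fun j => Real.exp (-β * μ j))
    (r : ℕ → ℝ) (hr : ∀ i, 0 ≤ r i) (hrsum : Summable r) (hrtot : ∑' i, r i = 1)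
    (hS : Summable fun i => r i * Real.log (r i))
    (hEn : Summable fun j => μ j * ∑' i, r i * ‖⟪c i, b j⟫_ℂ‖ ^ 2)
    (hlogsum : Summable fun j =>
      Real.log (Real.exp (-β * μ j) / ∑' k, Real.exp (-β * μ k)) *
        ∑' i, r i * ‖⟪c i, b j⟫_ℂ‖ ^ 2) :
    (∑' i, r i * Real.log (r i)) -
        (∑' j, Real.log (Real.exp (-β * μ j) / ∑' k, Real.exp (-β * μ k)) *
          ∑' i, r i * ‖⟪c i, b j⟫_ℂ‖ ^ 2) =
      (∑' i, r i * Real.log (r i)) +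
        β * (∑' j, μ j * ∑' i, r i * ‖⟪c i, b j⟫_ℂ‖ ^ 2) +
        Real.log (∑' j, Real.exp (-β * μ j)) :=
  stmt15_general b c μ β hZ r hr hrsum hrtot hEn
end

section
/- Let H be a separable Hilbert space, B a positive self-adjoint operator with B ≥ Id, and (ρ_m) a sequence of nonnegative trace-class operators such that ρ_m → ρ weak-* in trace class and B^{1/2} ρ_m B^{1/2} → σ weak-* in trace class for some trace-class σ. Then σ = B^{1/2} ρ B^{1/2} (in particular B^{1/2} ρ B^{1/2} is trace class). -/
/-!
Test both convergences against the rank-one compact operator `K = ⟨b i, ·⟩ • b j`. Then the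
trace `∑ₖ ⟨b k, T K b k⟩` is the matrix entry `⟨b i, T b j⟩` (Parseval), and the weighted double
sum collapses to its `(i, j)` term `√μᵢ √μⱼ ⟨b i, ρₘ b j⟩`. Hence the entries of `ρₘ` converge to
those of `ρ`, the weighted entries converge to those of `σ`, and uniqueness of limits identifies
them.
-/

open Filter Topology
open scoped InnerProductSpace ENNReal

theorem ContinuousLinearMap.isCompactOperator_smulRight {𝕜 E F : Type*}
    [NontriviallyNormedField 𝕜] [LocallyCompactSpace 𝕜] [NormedAddCommGroup E] [NormedSpace 𝕜 E]
    [NormedAddCommGroup F] [NormedSpace 𝕜 F] (f : E →L[𝕜] 𝕜) (v : F) :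
    IsCompactOperator (f.smulRight v) :=
  (isCompactOperator_of_locallyCompactSpace_dom f).clm_comp (toSpanSingleton 𝕜 v)

section RankOne

variable {ι 𝕜 E : Type*} [RCLike 𝕜] [NormedAddCommGroup E] [InnerProductSpace 𝕜 E]

theorem HilbertBasis.tsum_inner_comp_smulRight_innerSL (b : HilbertBasis ι 𝕜 E)
    (T : E →L[𝕜] E) (u v : E) :
    ∑' k, ⟪b k, (T ∘L (innerSL 𝕜 u).smulRight v) (b k)⟫_𝕜 = ⟪u, T v⟫_𝕜 := by
  simp only [ContinuousLinearMap.comp_apply, ContinuousLinearMap.smulRight_apply,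
    innerSL_apply_apply, map_smul, inner_smul_right]
  exact b.tsum_inner_mul_inner u (T v)

theorem Orthonormal.inner_smulRight_innerSL_apply [DecidableEq ι] {b : ι → E}
    (hb : Orthonormal 𝕜 b) (i j k l : ι) :
    ⟪b l, (innerSL 𝕜 (b i)).smulRight (b j) (b k)⟫_𝕜 = if (k, l) = (i, j) then 1 else 0 := by
  simp only [ContinuousLinearMap.smulRight_apply, innerSL_apply_apply, inner_smul_right,
    orthonormal_iff_ite.mp hb, Prod.ext_iff, eq_comm (a := k), eq_comm (a := l)]
  split_ifs <;> simp_all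

theorem Orthonormal.tsum_mul_inner_smulRight_innerSL [DecidableEq ι] {b : ι → E}
    (hb : Orthonormal 𝕜 b) (f : ι × ι → 𝕜) (i j : ι) :
    ∑' p : ι × ι, f p * ⟪b p.2, (innerSL 𝕜 (b i)).smulRight (b j) (b p.1)⟫_𝕜 = f (i, j) := by
  simp only [hb.inner_smulRight_innerSL_apply, mul_ite, mul_one, mul_zero, tsum_ite_eq]

end RankOne

theorem stmt19_general {H : Type*} [NormedAddCommGroup H] [InnerProductSpace ℂ H]
    [CompleteSpace H] (b : HilbertBasis ℕ ℂ H) (μ : ℕ → ℝ)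
    (ρm : ℕ → H →L[ℂ] H) (ρ σ : H →L[ℂ] H)
    (hweak : ∀ K : H →L[ℂ] H, IsCompactOperator K →
      Tendsto (fun m => ∑' i, ⟪b i, ((ρm m) ∘L K) (b i)⟫_ℂ) atTop
        (𝓝 (∑' i, ⟪b i, (ρ ∘L K) (b i)⟫_ℂ)))
    (hweakB : ∀ K : H →L[ℂ] H, IsCompactOperator K →
      Tendsto (fun m => ∑' (p : ℕ × ℕ),
          ((Real.sqrt (μ p.1) * Real.sqrt (μ p.2) : ℝ) : ℂ) *
            ⟪b p.1, (ρm m) (b p.2)⟫_ℂ * ⟪b p.2, K (b p.1)⟫_ℂ) atTop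
        (𝓝 (∑' i, ⟪b i, (σ ∘L K) (b i)⟫_ℂ))) :
    ∀ i j : ℕ, ⟪b i, σ (b j)⟫_ℂ =
      ((Real.sqrt (μ i) * Real.sqrt (μ j) : ℝ) : ℂ) * ⟪b i, ρ (b j)⟫_ℂ := by
  intro i j
  set K := (innerSL ℂ (b i)).smulRight (b j)
  have hK : IsCompactOperator K := (innerSL ℂ (b i)).isCompactOperator_smulRight (b j)
  have hρ : Tendsto (fun m => ⟪b i, ρm m (b j)⟫_ℂ) atTop (𝓝 ⟪b i, ρ (b j)⟫_ℂ) := by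
    simpa only [K, b.tsum_inner_comp_smulRight_innerSL] using hweak K hK
  have hσ : Tendsto (fun m => ((Real.sqrt (μ i) * Real.sqrt (μ j) : ℝ) : ℂ) *
      ⟪b i, ρm m (b j)⟫_ℂ) atTop (𝓝 ⟪b i, σ (b j)⟫_ℂ) := by
    simpa only [K, b.tsum_inner_comp_smulRight_innerSL,
      b.orthonormal.tsum_mul_inner_smulRight_innerSL] using hweakB K hK
  exact tendsto_nhds_unique hσ (hρ.const_mul _)

/-- Identification step of Lemma 4.3.  The positive self-adjoint operator `B ≥ Id` is
described by its eigenbasis `b` and eigenvalues `μ_j ≥ 1`; `B^{1/2} T B^{1/2}` tested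
against a compact operator `K` has trace
`∑_{i,j} √μ_i √μ_j ⟨b_i, T b_j⟩ ⟨b_j, K b_i⟩`.  If nonnegative trace-class `ρ_m → ρ`
weak-* in trace class and `B^{1/2} ρ_m B^{1/2} → σ` weak-* in trace class, then
`σ = B^{1/2} ρ B^{1/2}`, i.e. `⟨b_i, σ b_j⟩ = √μ_i √μ_j ⟨b_i, ρ b_j⟩` for all `i, j`. -/
theorem stmt19 {H : Type*} [NormedAddCommGroup H] [InnerProductSpace ℂ H]
    [CompleteSpace H] (b : HilbertBasis ℕ ℂ H) (μ : ℕ → ℝ) (hμ : ∀ j, 1 ≤ μ j)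
    (ρm : ℕ → H →L[ℂ] H) (ρ σ : H →L[ℂ] H)
    (hpos : ∀ m, (ρm m).IsPositive) (htc : ∀ m, traceNorm (ρm m) < ⊤)
    (htcρ : traceNorm ρ < ⊤) (htcσ : traceNorm σ < ⊤)
    (hweak : ∀ K : H →L[ℂ] H, IsCompactOperator K →
      Tendsto (fun m => ∑' i, ⟪b i, ((ρm m) ∘L K) (b i)⟫_ℂ) atTop
        (𝓝 (∑' i, ⟪b i, (ρ ∘L K) (b i)⟫_ℂ)))
    (hweakB : ∀ K : H →L[ℂ] H, IsCompactOperator K →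
      Tendsto (fun m => ∑' (p : ℕ × ℕ),
          ((Real.sqrt (μ p.1) * Real.sqrt (μ p.2) : ℝ) : ℂ) *
            ⟪b p.1, (ρm m) (b p.2)⟫_ℂ * ⟪b p.2, K (b p.1)⟫_ℂ) atTop
        (𝓝 (∑' i, ⟪b i, (σ ∘L K) (b i)⟫_ℂ))) :
    ∀ i j : ℕ, ⟪b i, σ (b j)⟫_ℂ =
      ((Real.sqrt (μ i) * Real.sqrt (μ j) : ℝ) : ℂ) * ⟪b i, ρ (b j)⟫_ℂ :=
  stmt19_general b μ ρm ρ σ hweak hweakB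
end
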